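/- Let c^k_{ij} be structure constants of a real Lie algebra 𝔤 of dimension n. On ℝ^{n+1} with coordinates (x_1,…,x_n,φ) define Λ(f,g) := Σ_{i,j,k} x_k c^k_{ij} ∂_i f ∂_j g + Σ_i x_i (∂_φ f ∂_i g − ∂_i f ∂_φ g) and E(f) := ∂_φ f. Then {f,g} := Λ(f,g) + f·E(g) − g·E(f) is antisymmetric and satisfies the Jacobi identity for all smooth f,g,h : ℝ^{n+1} → ℝ; i.e. (Λ,E) is a linear Jacobi structure on ℝ^{n+1} (the dual of 𝔤⊕u(1)). -/

import Mathlib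

open scoped ContDiff

/-- The `i`-th partial derivative of `f : ℝ^{n+1} → ℝ`. -/
noncomputable def pd {n : ℕ} (i : Fin n) (f : (Fin n → ℝ) → ℝ) : (Fin n → ℝ) → ℝ :=
  fun x => fderiv ℝ f x (Pi.single i 1)

/-- The bivector `Λ` on `ℝ^{n+1} ≅ (𝔤 ⊕ u(1))*`:
`Λ(f,g) = ∑ x_k c^k_{ij} ∂_i f ∂_j g + ∑ x_i (∂_φ f ∂_i g - ∂_i f ∂_φ g)`,
where `φ` is the last coordinate. -/
noncomputable def extLambda {n : ℕ} (c : Fin n → Fin n → Fin n → ℝ)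
    (f g : (Fin (n + 1) → ℝ) → ℝ) : (Fin (n + 1) → ℝ) → ℝ :=
  fun x =>
    (∑ k : Fin n, ∑ i : Fin n, ∑ j : Fin n,
      x k.castSucc * c k i j * pd i.castSucc f x * pd j.castSucc g x) +
    ∑ i : Fin n, x i.castSucc *
      (pd (Fin.last n) f x * pd i.castSucc g x - pd i.castSucc f x * pd (Fin.last n) g x)

/-- The Jacobi bracket `{f,g} := Λ(f,g) + f·∂_φ g - g·∂_φ f` on `ℝ^{n+1}`. -/
noncomputable def extBr {n : ℕ} (c : Fin n → Fin n → Fin n → ℝ)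
    (f g : (Fin (n + 1) → ℝ) → ℝ) : (Fin (n + 1) → ℝ) → ℝ :=
  fun x => extLambda c f g x + f x * pd (Fin.last n) g x - g x * pd (Fin.last n) f x

/-!
Write `π(x)` for the matrix of `Λ` at `x`, `ℓ` for the index of `φ` and
`X_f = (∇f)ᵀ π + f e_ℓ` for the Hamiltonian vector of `f`, so that `{f, g} = X_f · ∇g - g ∂_ℓ f`.
Differentiating once, the Jacobiator of `f, g, h` at a point becomes a polynomial in the 2-jets of
`f, g, h`. Because `π` is antisymmetric, the Hessians only enter through
`Hess h (X_f, X_g) - Hess h (X_g, X_f)` and its cyclic permutations, which vanish by symmetry of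
second derivatives. Because `π` does not depend on `φ`, what is left is the trilinear form
`∑ ∂_a f ∂_b g ∂_e h · D_{abe}`, where `D` (`cyclicDefect`) is the coordinate form of the
condition `[Λ, Λ] = 2 E ∧ Λ`. Here `D` is linear in `x`: its components with all indices in `𝔤`
are the Jacobi identity of the `c^k_{ij}`, and those involving `φ` cancel by antisymmetry.
-/

open Matrix

section PartialDerivative

variable {N : ℕ} {f g : (Fin N → ℝ) → ℝ} {x : Fin N → ℝ}

lemma pd_fun_add (hf : DifferentiableAt ℝ f x) (hg : DifferentiableAt ℝ g x) (a : Fin N) :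
    pd a (fun y => f y + g y) x = pd a f x + pd a g x := by
  simp [pd, fderiv_fun_add hf hg]

lemma pd_fun_sub (hf : DifferentiableAt ℝ f x) (hg : DifferentiableAt ℝ g x) (a : Fin N) :
    pd a (fun y => f y - g y) x = pd a f x - pd a g x := by
  simp [pd, fderiv_fun_sub hf hg]

lemma pd_fun_mul (hf : DifferentiableAt ℝ f x) (hg : DifferentiableAt ℝ g x) (a : Fin N) :
    pd a (fun y => f y * g y) x = pd a f x * g x + f x * pd a g x := by
  simp [pd, fderiv_fun_mul hf hg]; ring

lemma pd_fun_sum {ι : Type*} {s : Finset ι} {A : ι → (Fin N → ℝ) → ℝ}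
    (h : ∀ i ∈ s, DifferentiableAt ℝ (A i) x) (a : Fin N) :
    pd a (fun y => ∑ i ∈ s, A i y) x = ∑ i ∈ s, pd a (A i) x := by
  simp [pd, fderiv_fun_sum h]

lemma pd_const (r : ℝ) (a : Fin N) : pd a (fun _ => r) x = 0 := by
  simp [pd]

lemma pd_dotProduct_const (v : Fin N → ℝ) (a : Fin N) :
    pd a (fun y => y ⬝ᵥ v) x = v a := by
  have hlin : (fun y : Fin N → ℝ => y ⬝ᵥ v) =
      ⇑(∑ m, v m • ContinuousLinearMap.proj (R := ℝ) (φ := fun _ : Fin N => ℝ) m) := by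
    ext y; simp [dotProduct, mul_comm]
  simp [pd, hlin, ContinuousLinearMap.fderiv, Pi.single_apply]

lemma ContDiff.differentiableAt_pd (hf : ContDiff ℝ 2 f) (a : Fin N) (x : Fin N → ℝ) :
    DifferentiableAt ℝ (pd a f) x :=
  ((hf.fderiv_right (m := 1) (by norm_num)).clm_apply contDiff_const).differentiable
    one_ne_zero x

lemma pd_pd_eq_fderiv_fderiv (hf : ContDiff ℝ 2 f) (a b : Fin N) (x : Fin N → ℝ) :
    pd a (pd b f) x = fderiv ℝ (fderiv ℝ f) x (Pi.single a 1) (Pi.single b 1) := by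
  have hdf : DifferentiableAt ℝ (fderiv ℝ f) x :=
    (hf.fderiv_right (m := 1) (by norm_num)).differentiable one_ne_zero x
  change fderiv ℝ (fun y => fderiv ℝ f y (Pi.single b 1)) x (Pi.single a 1) = _
  simp [fderiv_clm_apply hdf (differentiableAt_const _)]

lemma pd_pd_comm (hf : ContDiff ℝ 2 f) (a b : Fin N) (x : Fin N → ℝ) :
    pd a (pd b f) x = pd b (pd a f) x := by
  rw [pd_pd_eq_fderiv_fderiv hf, pd_pd_eq_fderiv_fderiv hf]
  exact (hf.contDiffAt.isSymmSndFDerivAt (by simp [minSmoothness_of_isRCLikeNormedField])).eq _ _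

end PartialDerivative

section JetAlgebra

variable {ι : Type*} [Fintype ι]

def trilinear (K : ι → ι → ι → ℝ) (U V W : ι → ℝ) : ℝ :=
  ∑ a, ∑ b, ∑ e, K a b e * U a * V b * W e

lemma trilinear_rotate (K : ι → ι → ι → ℝ) (U V W : ι → ℝ) :
    trilinear K V W U = trilinear (fun a b e => K b e a) U V W := by
  unfold trilinear
  rw [Finset.sum_congr rfl fun _ _ => Finset.sum_comm, Finset.sum_comm]
  exact Finset.sum_congr rfl fun _ _ => Finset.sum_congr rfl fun _ _ =>
    Finset.sum_congr rfl fun _ _ => by ring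

lemma trilinear_add (K K' : ι → ι → ι → ℝ) (U V W : ι → ℝ) :
    trilinear (K + K') U V W = trilinear K U V W + trilinear K' U V W := by
  simp only [trilinear, Pi.add_apply, add_mul, Finset.sum_add_distrib]

lemma dotProduct_mulVec_comm {A : Matrix ι ι ℝ} (hA : A.IsSymm) (u v : ι → ℝ) :
    u ⬝ᵥ A *ᵥ v = v ⬝ᵥ A *ᵥ u := by
  rw [dotProduct_mulVec, ← mulVec_transpose, hA.eq, dotProduct_comm]

variable (p : Matrix ι ι ℝ) (P : ι → Matrix ι ι ℝ)

lemma vecMul_dotProduct_of_transpose_eq_neg (hp : pᵀ = -p) (U V : ι → ℝ) :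
    U ᵥ* p ⬝ᵥ V = -(V ᵥ* p ⬝ᵥ U) := by
  rw [← dotProduct_mulVec, ← vecMul_transpose, hp, vecMul_neg, dotProduct_neg, dotProduct_comm]

lemma vecMul_dotProduct_vecMul_dotProduct (U V W : ι → ℝ) :
    U ᵥ* p ⬝ᵥ (fun d => V ᵥ* P d ⬝ᵥ W) =
      trilinear (fun a b e => ∑ d, p a d * P d b e) U V W := by
  rw [← dotProduct_mulVec]
  refine Finset.sum_congr rfl fun a _ => ?_
  simp only [mulVec, dotProduct, vecMul, Finset.mul_sum, Finset.sum_mul]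
  rw [Finset.sum_comm, Finset.sum_congr rfl fun _ _ => Finset.sum_comm, Finset.sum_comm]
  exact Finset.sum_congr rfl fun _ _ => Finset.sum_congr rfl fun _ _ =>
    Finset.sum_congr rfl fun _ _ => by ring

variable [DecidableEq ι] (ℓ : ι)

lemma vecMul_dotProduct_mul_apply (U V W : ι → ℝ) :
    (U ᵥ* p ⬝ᵥ V) * W ℓ = trilinear (fun a b e => p a b * (Pi.single ℓ 1 : ι → ℝ) e) U V W := by
  simp only [trilinear, Pi.single_apply, mul_ite, ite_mul, mul_one, mul_zero, zero_mul,
    Finset.sum_ite_eq', Finset.mem_univ, if_true, dotProduct, vecMul, Finset.sum_mul]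
  rw [Finset.sum_comm]
  exact Finset.sum_congr rfl fun _ _ => Finset.sum_congr rfl fun _ _ => by ring

def cyclicDefect (a b e : ι) : ℝ :=
  ∑ d, (p a d * P d b e + p b d * P d e a + p e d * P d a b) +
    (p a b * (Pi.single ℓ 1 : ι → ℝ) e + p b e * (Pi.single ℓ 1 : ι → ℝ) a +
      p e a * (Pi.single ℓ 1 : ι → ℝ) b)

lemma cyclicDefect_rotate (a b e : ι) :
    cyclicDefect p P ℓ a b e = cyclicDefect p P ℓ b e a := by
  simp only [cyclicDefect, Finset.sum_add_distrib]
  ring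

lemma cyclicDefect_swap (hp : pᵀ = -p) (hP : ∀ d, (P d)ᵀ = -P d) (a b e : ι) :
    cyclicDefect p P ℓ b a e = -cyclicDefect p P ℓ a b e := by
  have hp' (i j : ι) : p i j = -p j i := by simpa using congr_fun₂ hp j i
  have hP' (d i j : ι) : P d i j = -P d j i := by simpa using congr_fun₂ (hP d) j i
  have hsum : ∑ d, (p b d * P d a e + p a d * P d e b + p e d * P d b a) =
      -∑ d, (p a d * P d b e + p b d * P d e a + p e d * P d a b) := by
    rw [← Finset.sum_neg_distrib]
    exact Finset.sum_congr rfl fun d _ => by rw [hP' d a e, hP' d e b, hP' d b a]; ring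
  rw [cyclicDefect, cyclicDefect, hsum, hp' b a, hp' a e, hp' e b]
  ring

lemma cyclicDefect_self (hp : pᵀ = -p) (hP : ∀ d, (P d)ᵀ = -P d) (a e : ι) :
    cyclicDefect p P ℓ a a e = 0 := by
  linarith [cyclicDefect_swap p P ℓ hp hP a a e]

lemma trilinear_cyclicDefect (U V W : ι → ℝ) :
    trilinear (cyclicDefect p P ℓ) U V W =
      U ᵥ* p ⬝ᵥ (fun d => V ᵥ* P d ⬝ᵥ W) + V ᵥ* p ⬝ᵥ (fun d => W ᵥ* P d ⬝ᵥ U) +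
        W ᵥ* p ⬝ᵥ (fun d => U ᵥ* P d ⬝ᵥ V) +
        ((U ᵥ* p ⬝ᵥ V) * W ℓ + (V ᵥ* p ⬝ᵥ W) * U ℓ + (W ᵥ* p ⬝ᵥ U) * V ℓ) := by
  have hV (K : ι → ι → ι → ℝ) : trilinear K V W U = trilinear (fun a b e => K b e a) U V W :=
    trilinear_rotate K U V W
  have hW (K : ι → ι → ι → ℝ) : trilinear K W U V = trilinear (fun a b e => K e a b) U V W := by
    rw [trilinear_rotate, hV]
  simp only [vecMul_dotProduct_vecMul_dotProduct, vecMul_dotProduct_mul_apply, hV, hW,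
    ← trilinear_add]
  refine congrArg (trilinear · U V W) (funext fun a => funext fun b => funext fun e => ?_)
  simp only [cyclicDefect, Pi.add_apply, Finset.sum_add_distrib]

def hamVec (u : ℝ) (U : ι → ℝ) : ι → ℝ := U ᵥ* p + u • Pi.single ℓ 1

lemma hamVec_apply (u : ℝ) (U : ι → ℝ) (e : ι) :
    hamVec p ℓ u U e = ∑ c, U c * p c e + u * (Pi.single ℓ 1 : ι → ℝ) e := by
  simp [hamVec, vecMul, dotProduct]

def jetBracket (u : ℝ) (U : ι → ℝ) (v : ℝ) (V : ι → ℝ) : ℝ :=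
  hamVec p ℓ u U ⬝ᵥ V - v * U ℓ

-- `∇{g, h}` from the 2-jets of `g` and `h` and from `P d = ∂_d p` (see `grad_jacobiBracket`);
-- antisymmetry of `p` lets the Hessians enter only through Hamiltonian vectors.
def jetBracketGrad (v : ℝ) (V : ι → ℝ) (V2 : Matrix ι ι ℝ) (w : ℝ) (W : ι → ℝ)
    (W2 : Matrix ι ι ℝ) : ι → ℝ :=
  -(V2 *ᵥ hamVec p ℓ w W) + (fun d => V ᵥ* P d ⬝ᵥ W) + W ℓ • V + W2 *ᵥ hamVec p ℓ v V -
    V ℓ • W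

lemma jetBracket_antisymm (hp : pᵀ = -p) (u : ℝ) (U : ι → ℝ) (v : ℝ) (V : ι → ℝ) :
    jetBracket p ℓ u U v V = -jetBracket p ℓ v V u U := by
  simp only [jetBracket, hamVec, add_dotProduct, smul_dotProduct, single_dotProduct,
    vecMul_dotProduct_of_transpose_eq_neg p hp U V, smul_eq_mul]
  ring

lemma jetBracket_jetBracketGrad (hP : P ℓ = 0) (u : ℝ) (U : ι → ℝ) (v : ℝ) (V : ι → ℝ)
    (V2 : Matrix ι ι ℝ) (w : ℝ) (W : ι → ℝ) (W2 : Matrix ι ι ℝ) :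
    jetBracket p ℓ u U (jetBracket p ℓ v V w W) (jetBracketGrad p P ℓ v V V2 w W W2) =
      U ᵥ* p ⬝ᵥ (fun d => V ᵥ* P d ⬝ᵥ W) + (U ᵥ* p ⬝ᵥ V) * W ℓ - (U ᵥ* p ⬝ᵥ W) * V ℓ -
        (V ᵥ* p ⬝ᵥ W) * U ℓ + (w * V ℓ - v * W ℓ) * U ℓ -
        hamVec p ℓ u U ⬝ᵥ V2 *ᵥ hamVec p ℓ w W + hamVec p ℓ u U ⬝ᵥ W2 *ᵥ hamVec p ℓ v V := by
  simp only [jetBracket, jetBracketGrad, dotProduct_add, dotProduct_sub, dotProduct_neg,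
    dotProduct_smul, smul_eq_mul]
  simp only [hamVec, add_dotProduct, smul_dotProduct, single_dotProduct, hP, vecMul_zero,
    zero_dotProduct, smul_eq_mul]
  ring

theorem jetBracket_jacobi (hp : pᵀ = -p) (hP : P ℓ = 0)
    (hdefect : ∀ a b e, cyclicDefect p P ℓ a b e = 0) {u v w : ℝ} {U V W : ι → ℝ}
    {U2 V2 W2 : Matrix ι ι ℝ} (hU2 : U2.IsSymm) (hV2 : V2.IsSymm) (hW2 : W2.IsSymm) :
    jetBracket p ℓ u U (jetBracket p ℓ v V w W) (jetBracketGrad p P ℓ v V V2 w W W2) +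
      jetBracket p ℓ v V (jetBracket p ℓ w W u U) (jetBracketGrad p P ℓ w W W2 u U U2) +
      jetBracket p ℓ w W (jetBracket p ℓ u U v V) (jetBracketGrad p P ℓ u U U2 v V V2) = 0 := by
  have hfirst : trilinear (cyclicDefect p P ℓ) U V W = 0 := by simp [trilinear, hdefect]
  rw [trilinear_cyclicDefect] at hfirst
  simp only [jetBracket_jetBracketGrad p P ℓ hP]
  linear_combination hfirst - V ℓ * vecMul_dotProduct_of_transpose_eq_neg p hp U W -
    W ℓ * vecMul_dotProduct_of_transpose_eq_neg p hp V U -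
    U ℓ * vecMul_dotProduct_of_transpose_eq_neg p hp W V +
    dotProduct_mulVec_comm hU2 (hamVec p ℓ v V) (hamVec p ℓ w W) +
    dotProduct_mulVec_comm hV2 (hamVec p ℓ w W) (hamVec p ℓ u U) +
    dotProduct_mulVec_comm hW2 (hamVec p ℓ u U) (hamVec p ℓ v V)

end JetAlgebra

noncomputable section JacobiBracket

variable {N : ℕ}

def grad (f : (Fin N → ℝ) → ℝ) (x : Fin N → ℝ) : Fin N → ℝ := fun a => pd a f x

def hess (f : (Fin N → ℝ) → ℝ) (x : Fin N → ℝ) : Matrix (Fin N) (Fin N) ℝ :=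
  Matrix.of fun a b => pd a (pd b f) x

lemma hess_isSymm {f : (Fin N → ℝ) → ℝ} (hf : ContDiff ℝ 2 f) (x : Fin N → ℝ) :
    (hess f x).IsSymm :=
  Matrix.IsSymm.ext fun a b => pd_pd_comm hf b a x

variable (π : (Fin N → ℝ) → Matrix (Fin N) (Fin N) ℝ) (ℓ : Fin N)

def bivectorPd (x : Fin N → ℝ) (d : Fin N) : Matrix (Fin N) (Fin N) ℝ :=
  Matrix.of fun a b => pd d (fun y => π y a b) x

def jacobiBracket (f g : (Fin N → ℝ) → ℝ) : (Fin N → ℝ) → ℝ :=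
  fun x => jetBracket (π x) ℓ (f x) (grad f x) (g x) (grad g x)

lemma jacobiBracket_antisymm (hπ : ∀ x, (π x)ᵀ = -π x) (f g : (Fin N → ℝ) → ℝ) :
    jacobiBracket π ℓ f g = fun x => -jacobiBracket π ℓ g f x :=
  funext fun x => jetBracket_antisymm _ _ (hπ x) _ _ _ _

variable {π} {g h : (Fin N → ℝ) → ℝ}

lemma pd_hamVec (hπ : ∀ a b, Differentiable ℝ fun y => π y a b) (hg : ContDiff ℝ 2 g)
    (d e : Fin N) (x : Fin N → ℝ) :
    pd d (fun y => hamVec (π y) ℓ (g y) (grad g y) e) x =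
      (hess g x d ᵥ* π x + grad g x ᵥ* bivectorPd π x d + grad g x d • Pi.single ℓ 1 :
        Fin N → ℝ) e := by
  have hform : (fun y => hamVec (π y) ℓ (g y) (grad g y) e) =
      fun y => ∑ c, pd c g y * π y c e + g y * (Pi.single ℓ 1 : Fin N → ℝ) e :=
    funext fun y => hamVec_apply ..
  have hdg : ∀ c, DifferentiableAt ℝ (pd c g) x := fun c => hg.differentiableAt_pd c x
  have hg' : DifferentiableAt ℝ g x := hg.differentiable (by norm_num) x
  rw [hform, pd_fun_add (by fun_prop) (by fun_prop), pd_fun_sum (by fun_prop),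
    pd_fun_mul hg' (differentiableAt_const _),
    Finset.sum_congr rfl fun c _ => pd_fun_mul (hdg c) (hπ c e x) d]
  simp [pd_const, hess, bivectorPd, grad, vecMul, dotProduct, Finset.sum_add_distrib]

lemma differentiableAt_hamVec (hπ : ∀ a b, Differentiable ℝ fun y => π y a b)
    (hg : ContDiff ℝ 2 g) (e : Fin N) (x : Fin N → ℝ) :
    DifferentiableAt ℝ (fun y => hamVec (π y) ℓ (g y) (grad g y) e) x := by
  have hdg : ∀ c, DifferentiableAt ℝ (pd c g) x := fun c => hg.differentiableAt_pd c x
  have hg' : DifferentiableAt ℝ g x := hg.differentiable (by norm_num) x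
  simp only [hamVec_apply, grad]
  fun_prop

lemma pd_jacobiBracket (hπ : ∀ a b, Differentiable ℝ fun y => π y a b) (hg : ContDiff ℝ 2 g)
    (hh : ContDiff ℝ 2 h) (d : Fin N) (x : Fin N → ℝ) :
    pd d (jacobiBracket π ℓ g h) x =
      (hess g x d ᵥ* π x + grad g x ᵥ* bivectorPd π x d + grad g x d • Pi.single ℓ 1) ⬝ᵥ
          grad h x + hamVec (π x) ℓ (g x) (grad g x) ⬝ᵥ hess h x d -
        grad h x d * grad g x ℓ - h x * hess g x d ℓ := by
  have hform : jacobiBracket π ℓ g h =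
      fun y => ∑ e, hamVec (π y) ℓ (g y) (grad g y) e * pd e h y - h y * pd ℓ g y := rfl
  have hX := differentiableAt_hamVec ℓ hπ hg (x := x)
  have hdg : ∀ c, DifferentiableAt ℝ (pd c g) x := fun c => hg.differentiableAt_pd c x
  have hdh : ∀ c, DifferentiableAt ℝ (pd c h) x := fun c => hh.differentiableAt_pd c x
  have hh' : DifferentiableAt ℝ h x := hh.differentiable (by norm_num) x
  rw [hform, pd_fun_sub (by fun_prop) (by fun_prop), pd_fun_sum (by fun_prop),
    pd_fun_mul hh' (hdg ℓ),
    Finset.sum_congr rfl fun e _ => pd_fun_mul (hX e) (hdh e) d]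
  simp only [pd_hamVec ℓ hπ hg]
  simp only [hess, grad, Pi.add_apply, Pi.smul_apply, smul_eq_mul, Finset.sum_add_distrib,
    dotProduct, of_apply]
  ring

lemma grad_jacobiBracket (hanti : ∀ x, (π x)ᵀ = -π x)
    (hπ : ∀ a b, Differentiable ℝ fun y => π y a b) (hg : ContDiff ℝ 2 g) (hh : ContDiff ℝ 2 h)
    (x : Fin N → ℝ) :
    grad (jacobiBracket π ℓ g h) x = jetBracketGrad (π x) (bivectorPd π x) ℓ
      (g x) (grad g x) (hess g x) (h x) (grad h x) (hess h x) := by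
  ext d
  rw [grad, pd_jacobiBracket ℓ hπ hg hh]
  simp only [jetBracketGrad, hamVec, Pi.add_apply, Pi.sub_apply, Pi.neg_apply, Pi.smul_apply,
    mulVec, add_dotProduct, dotProduct_add, smul_dotProduct, dotProduct_smul, single_dotProduct,
    dotProduct_single, smul_eq_mul]
  rw [vecMul_dotProduct_of_transpose_eq_neg _ (hanti x)]
  simp only [dotProduct_comm, one_mul, mul_one, neg_add_rev]
  ring

theorem jacobiBracket_jacobi (hanti : ∀ x, (π x)ᵀ = -π x)
    (hπ : ∀ a b, Differentiable ℝ fun y => π y a b) (hℓ : ∀ x, bivectorPd π x ℓ = 0)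
    (hdefect : ∀ x a b e, cyclicDefect (π x) (bivectorPd π x) ℓ a b e = 0)
    {f : (Fin N → ℝ) → ℝ} (hf : ContDiff ℝ 2 f) (hg : ContDiff ℝ 2 g) (hh : ContDiff ℝ 2 h)
    (x : Fin N → ℝ) :
    jacobiBracket π ℓ f (jacobiBracket π ℓ g h) x + jacobiBracket π ℓ g (jacobiBracket π ℓ h f) x +
      jacobiBracket π ℓ h (jacobiBracket π ℓ f g) x = 0 := by
  have hjet := jetBracket_jacobi (π x) (bivectorPd π x) ℓ (hanti x) (hℓ x) (hdefect x)
    (hess_isSymm hf x) (hess_isSymm hg x) (hess_isSymm hh x) (u := f x) (U := grad f x)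
    (v := g x) (V := grad g x) (w := h x) (W := grad h x)
  rw [← grad_jacobiBracket ℓ hanti hπ hg hh, ← grad_jacobiBracket ℓ hanti hπ hh hf,
    ← grad_jacobiBracket ℓ hanti hπ hf hg] at hjet
  exact hjet

end JacobiBracket

section LinearBivector

variable {N : ℕ} (P : Fin N → Matrix (Fin N) (Fin N) ℝ)

def linearBivector (y : Fin N → ℝ) : Matrix (Fin N) (Fin N) ℝ := ∑ m, y m • P m

lemma linearBivector_apply (y : Fin N → ℝ) (a b : Fin N) :
    linearBivector P y a b = y ⬝ᵥ fun m => P m a b := by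
  simp [linearBivector, Matrix.sum_apply, dotProduct]

lemma linearBivector_transpose (hP : ∀ m, (P m)ᵀ = -P m) (y : Fin N → ℝ) :
    (linearBivector P y)ᵀ = -linearBivector P y := by
  simp [linearBivector, Matrix.transpose_sum, hP]

lemma differentiable_linearBivector_apply (a b : Fin N) :
    Differentiable ℝ fun y => linearBivector P y a b := by
  simp only [linearBivector_apply, dotProduct]
  fun_prop

lemma bivectorPd_linearBivector (x : Fin N → ℝ) : bivectorPd (linearBivector P) x = P := by
  ext d a b
  simp [bivectorPd, linearBivector_apply, pd_dotProduct_const]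

end LinearBivector

section DualOfGPlusU1

variable {n : ℕ} (c : Fin n → Fin n → Fin n → ℝ)

-- The matrix of `Λ` at `x` is `∑ m, x m • extLambdaCoeff c m`; the last coordinate is `φ`.
def extLambdaCoeff : Fin (n + 1) → Matrix (Fin (n + 1)) (Fin (n + 1)) ℝ :=
  Fin.lastCases 0 fun k => Matrix.of fun a b =>
    Fin.lastCases (Fin.lastCases 0 (fun j => if k = j then 1 else 0) b)
      (fun i => Fin.lastCases (if k = i then -1 else 0) (fun j => c k i j) b) a

@[simp] lemma extLambdaCoeff_last : extLambdaCoeff c (Fin.last n) = 0 := by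
  simp [extLambdaCoeff]

@[simp] lemma extLambdaCoeff_castSucc_castSucc_castSucc (k i j : Fin n) :
    extLambdaCoeff c k.castSucc i.castSucc j.castSucc = c k i j := by
  simp [extLambdaCoeff]

@[simp] lemma extLambdaCoeff_castSucc_last_castSucc (k j : Fin n) :
    extLambdaCoeff c k.castSucc (Fin.last n) j.castSucc = if k = j then 1 else 0 := by
  simp [extLambdaCoeff]

@[simp] lemma extLambdaCoeff_castSucc_castSucc_last (k i : Fin n) :
    extLambdaCoeff c k.castSucc i.castSucc (Fin.last n) = if k = i then -1 else 0 := by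
  simp [extLambdaCoeff]

@[simp] lemma extLambdaCoeff_castSucc_last_last (k : Fin n) :
    extLambdaCoeff c k.castSucc (Fin.last n) (Fin.last n) = 0 := by
  simp [extLambdaCoeff]

lemma extLambdaCoeff_transpose (hanti : ∀ k i j, c k i j = -c k j i) (m : Fin (n + 1)) :
    (extLambdaCoeff c m)ᵀ = -extLambdaCoeff c m := by
  ext a b
  induction m using Fin.lastCases with
  | last => simp
  | cast k =>
    induction a using Fin.lastCases with
    | last => induction b using Fin.lastCases <;> simp [eq_comm, apply_ite]
    | cast i =>
      induction b using Fin.lastCases with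
      | last => simp [eq_comm, apply_ite]
      | cast j => simpa using hanti k j i

abbrev extLambdaMatrix : (Fin (n + 1) → ℝ) → Matrix (Fin (n + 1)) (Fin (n + 1)) ℝ :=
  linearBivector (extLambdaCoeff c)

@[simp] lemma extLambdaMatrix_castSucc_castSucc (y : Fin (n + 1) → ℝ) (i j : Fin n) :
    extLambdaMatrix c y i.castSucc j.castSucc = ∑ k : Fin n, y k.castSucc * c k i j := by
  simp [linearBivector_apply, dotProduct, Fin.sum_univ_castSucc]

@[simp] lemma extLambdaMatrix_last_castSucc (y : Fin (n + 1) → ℝ) (j : Fin n) :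
    extLambdaMatrix c y (Fin.last n) j.castSucc = y j.castSucc := by
  simp [linearBivector_apply, dotProduct, Fin.sum_univ_castSucc]

@[simp] lemma extLambdaMatrix_castSucc_last (y : Fin (n + 1) → ℝ) (i : Fin n) :
    extLambdaMatrix c y i.castSucc (Fin.last n) = -y i.castSucc := by
  simp [linearBivector_apply, dotProduct, Fin.sum_univ_castSucc]

@[simp] lemma extLambdaMatrix_last_last (y : Fin (n + 1) → ℝ) :
    extLambdaMatrix c y (Fin.last n) (Fin.last n) = 0 := by
  simp [linearBivector_apply, dotProduct, Fin.sum_univ_castSucc]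

lemma extLambda_eq (f g : (Fin (n + 1) → ℝ) → ℝ) (x : Fin (n + 1) → ℝ) :
    extLambda c f g x = grad f x ᵥ* extLambdaMatrix c x ⬝ᵥ grad g x := by
  simp only [extLambda, dotProduct, vecMul, Fin.sum_univ_castSucc, grad,
    extLambdaMatrix_castSucc_castSucc, extLambdaMatrix_castSucc_last,
    extLambdaMatrix_last_castSucc, extLambdaMatrix_last_last]
  have h𝔤 : ∑ k : Fin n, ∑ i : Fin n, ∑ j : Fin n,
        x k.castSucc * c k i j * pd i.castSucc f x * pd j.castSucc g x =
      ∑ j : Fin n, (∑ i : Fin n, pd i.castSucc f x * ∑ k : Fin n, x k.castSucc * c k i j) *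
        pd j.castSucc g x := by
    simp only [Finset.sum_mul, Finset.mul_sum]
    rw [Finset.sum_congr rfl fun _ _ => Finset.sum_comm, Finset.sum_comm,
      Finset.sum_congr rfl fun _ _ => Finset.sum_comm]
    exact Finset.sum_congr rfl fun _ _ => Finset.sum_congr rfl fun _ _ =>
      Finset.sum_congr rfl fun _ _ => by ring
  have hφ : ∑ i : Fin n, x i.castSucc *
        (pd (Fin.last n) f x * pd i.castSucc g x - pd i.castSucc f x * pd (Fin.last n) g x) =
      ∑ j : Fin n, pd (Fin.last n) f x * x j.castSucc * pd j.castSucc g x +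
        (∑ i : Fin n, pd i.castSucc f x * -x i.castSucc + pd (Fin.last n) f x * 0) *
          pd (Fin.last n) g x := by
    simp only [mul_zero, add_zero, Finset.sum_mul, ← Finset.sum_add_distrib]
    exact Finset.sum_congr rfl fun _ _ => by ring
  rw [h𝔤, hφ, ← add_assoc, ← Finset.sum_add_distrib]
  simp only [add_mul]

lemma extBr_eq_jacobiBracket : extBr c = jacobiBracket (extLambdaMatrix c) (Fin.last n) := by
  ext f g x
  simp only [extBr, extLambda_eq, jacobiBracket, jetBracket, hamVec, add_dotProduct,
    smul_dotProduct, single_dotProduct, smul_eq_mul, one_mul]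
  rfl

lemma cyclicDefect_extLambda_castSucc_castSucc_castSucc (hanti : ∀ k i j, c k i j = -c k j i)
    (hjac : ∀ i j k m : Fin n,
      ∑ ν : Fin n, (c ν i j * c m ν k + c ν j k * c m ν i + c ν k i * c m ν j) = 0)
    (x : Fin (n + 1) → ℝ) (i j m : Fin n) :
    cyclicDefect (extLambdaMatrix c x) (extLambdaCoeff c) (Fin.last n)
      i.castSucc j.castSucc m.castSucc = 0 := by
  simp only [cyclicDefect, Fin.sum_univ_castSucc, extLambdaMatrix_castSucc_castSucc,
    extLambdaMatrix_castSucc_last, extLambdaCoeff_castSucc_castSucc_castSucc, extLambdaCoeff_last,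
    Pi.single_apply, (Fin.castSucc_lt_last _).ne, if_false, Matrix.zero_apply, mul_zero, add_zero]
  calc _ = ∑ k : Fin n, x k.castSucc *
        -∑ ν, (c ν j m * c k ν i + c ν m i * c k ν j + c ν i j * c k ν m) := by
        simp only [Finset.sum_mul, Finset.mul_sum, ← Finset.sum_add_distrib, mul_neg,
          ← Finset.sum_neg_distrib]
        rw [Finset.sum_comm]
        exact Finset.sum_congr rfl fun k _ => Finset.sum_congr rfl fun ν _ => by
          rw [hanti k i ν, hanti k j ν, hanti k m ν]; ring
    _ = 0 := by simp [hjac]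

lemma cyclicDefect_extLambda_castSucc_castSucc_last (hanti : ∀ k i j, c k i j = -c k j i)
    (x : Fin (n + 1) → ℝ) (i j : Fin n) :
    cyclicDefect (extLambdaMatrix c x) (extLambdaCoeff c) (Fin.last n)
      i.castSucc j.castSucc (Fin.last n) = 0 := by
  have hji : ∑ k : Fin n, x k.castSucc * c k j i = -∑ k : Fin n, x k.castSucc * c k i j := by
    rw [← Finset.sum_neg_distrib]
    exact Finset.sum_congr rfl fun k _ => by rw [hanti k j i, mul_neg]
  simp [cyclicDefect, Fin.sum_univ_castSucc, (Fin.castSucc_lt_last _).ne,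
    Finset.sum_add_distrib, hji]

lemma cyclicDefect_extLambda_eq_zero (hanti : ∀ k i j, c k i j = -c k j i)
    (hjac : ∀ i j k m : Fin n,
      ∑ ν : Fin n, (c ν i j * c m ν k + c ν j k * c m ν i + c ν k i * c m ν j) = 0)
    (x : Fin (n + 1) → ℝ) (a b e : Fin (n + 1)) :
    cyclicDefect (extLambdaMatrix c x) (extLambdaCoeff c) (Fin.last n) a b e = 0 := by
  have hself := cyclicDefect_self _ _ (Fin.last n)
    (linearBivector_transpose _ (extLambdaCoeff_transpose c hanti) x)
    (extLambdaCoeff_transpose c hanti)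
  have hrot := cyclicDefect_rotate (extLambdaMatrix c x) (extLambdaCoeff c) (Fin.last n)
  have hlast := cyclicDefect_extLambda_castSucc_castSucc_last c hanti x
  induction a using Fin.lastCases with
  | last =>
    induction b using Fin.lastCases with
    | last => exact hself _ _
    | cast j =>
      induction e using Fin.lastCases with
      | last => rw [hrot, hrot]; exact hself _ _
      | cast m => rw [hrot]; exact hlast j m
  | cast i =>
    induction b using Fin.lastCases with
    | last =>
      induction e using Fin.lastCases with
      | last => rw [hrot]; exact hself _ _
      | cast m => rw [hrot, hrot]; exact hlast m i
    | cast j =>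
      induction e using Fin.lastCases with
      | last => exact hlast i j
      | cast m => exact cyclicDefect_extLambda_castSucc_castSucc_castSucc c hanti hjac x i j m

end DualOfGPlusU1

/-- For structure constants `c^k_{ij}` of a real Lie algebra `𝔤` of dimension
`n`, the pair `(Λ, E)` on `ℝ^{n+1}` with
`Λ(f,g) = ∑ x_k c^k_{ij} ∂_i f ∂_j g + ∑ x_i (∂_φ f ∂_i g - ∂_i f ∂_φ g)` and `E = ∂_φ`
defines a linear Jacobi structure on `ℝ^{n+1}` (the dual of `𝔤 ⊕ u(1)`): the bracket
`{f,g} := Λ(f,g) + f·E(g) - g·E(f)` is antisymmetric and satisfies the Jacobi identity on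
smooth functions. -/
theorem linear_jacobi_structure_on_dual_of_g_plus_u1 (n : ℕ)
    (c : Fin n → Fin n → Fin n → ℝ)
    (hanti : ∀ k i j, c k i j = -c k j i)
    (hjac : ∀ i j k m : Fin n,
      ∑ ν : Fin n, (c ν i j * c m ν k + c ν j k * c m ν i + c ν k i * c m ν j) = 0) :
    (∀ f g : (Fin (n + 1) → ℝ) → ℝ, ContDiff ℝ ∞ f → ContDiff ℝ ∞ g →
      extBr c f g = fun x => -(extBr c g f x)) ∧
    (∀ f g h : (Fin (n + 1) → ℝ) → ℝ, ContDiff ℝ ∞ f → ContDiff ℝ ∞ g → ContDiff ℝ ∞ h →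
      (fun x => extBr c f (extBr c g h) x + extBr c g (extBr c h f) x +
        extBr c h (extBr c f g) x) = 0) := by
  have hπ : ∀ x, (extLambdaMatrix c x)ᵀ = -extLambdaMatrix c x :=
    linearBivector_transpose _ (extLambdaCoeff_transpose c hanti)
  rw [extBr_eq_jacobiBracket]
  refine ⟨fun f g _ _ => jacobiBracket_antisymm _ _ hπ f g, fun f g h hf hg hh => ?_⟩
  ext x
  refine jacobiBracket_jacobi _ hπ (differentiable_linearBivector_apply _)
    (fun x => by rw [bivectorPd_linearBivector, extLambdaCoeff_last]) (fun x => ?_)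
    (contDiff_infty.1 hf 2) (contDiff_infty.1 hg 2) (contDiff_infty.1 hh 2) x
  rw [bivectorPd_linearBivector]
  exact cyclicDefect_extLambda_eq_zero c hanti hjac x
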